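/- Let a, b, φ be twice-differentiable real-valued functions on a real interval with a > 0 and b > 0, let V : ℝ → ℝ be differentiable, let k ∈ ℝ be a constant, and set H_a = a'/a, H_b = b'/b. Suppose that at every time t the equations 2H_aH_b + H_b² + k/b² = (1/2)φ'² + V(φ) and 2H_b' + 3H_b² + k/b² = −(1/2)φ'² + V(φ) and φ'' + (H_a + 2H_b)φ' + V'(φ) = 0 hold. Then at every time t with H_b(t) ≠ 0 the remaining Einstein equation H_a' + H_b' + H_a² + H_aH_b + H_b² = −(1/2)φ'² + V(φ) also holds. -/
import Mathlib


/-- For the homogeneous metric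
`ds² = −dt² + a(t)²dr² + b(t)²(dϑ² + f(ϑ)²dφ²)` with curvature index `k`
(units `8πG = 1`), sourced by a scalar field `φ` with potential `V`:
the 00- and θθ-components of the Einstein equations together with the
Klein–Gordon equation imply the remaining (rr-)Einstein equation at every
time where `H_b ≠ 0` (a reflection of the Bianchi identities). -/
theorem third_einstein_equation_follows
    (a b φ V : ℝ → ℝ) (a' a'' b' b'' φ' φ'' : ℝ → ℝ) (k : ℝ)
    (Ha Hb : ℝ → ℝ)
    (ha : ∀ t, HasDerivAt a (a' t) t) (ha' : ∀ t, HasDerivAt a' (a'' t) t)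
    (hb : ∀ t, HasDerivAt b (b' t) t) (hb' : ∀ t, HasDerivAt b' (b'' t) t)
    (hφ : ∀ t, HasDerivAt φ (φ' t) t) (hφ' : ∀ t, HasDerivAt φ' (φ'' t) t)
    (hV : Differentiable ℝ V)
    (hapos : ∀ t, 0 < a t) (hbpos : ∀ t, 0 < b t)
    (hHa : ∀ t, Ha t = a' t / a t) (hHb : ∀ t, Hb t = b' t / b t)
    (e0 : ∀ t, 2 * Ha t * Hb t + Hb t ^ 2 + k / b t ^ 2
        = (1 / 2) * φ' t ^ 2 + V (φ t))
    (e1 : ∀ t, 2 * deriv Hb t + 3 * Hb t ^ 2 + k / b t ^ 2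
        = -(1 / 2) * φ' t ^ 2 + V (φ t))
    (kg : ∀ t, φ'' t + (Ha t + 2 * Hb t) * φ' t + deriv V (φ t) = 0) :
    ∀ t, Hb t ≠ 0 →
      deriv Ha t + deriv Hb t + Ha t ^ 2 + Ha t * Hb t + Hb t ^ 2
        = -(1 / 2) * φ' t ^ 2 + V (φ t) := by
  intro t hBt
  have hane : ∀ s, a s ≠ 0 := fun s => (hapos s).ne'
  have hbne : ∀ s, b s ≠ 0 := fun s => (hbpos s).ne'
  -- derivatives of Ha and Hb
  have hHaD : ∀ s, HasDerivAt Ha ((a'' s * a s - a' s * a' s) / a s ^ 2) s := by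
    intro s
    have : HasDerivAt (fun u => a' u / a u) ((a'' s * a s - a' s * a' s) / a s ^ 2) s :=
      (ha' s).div (ha s) (hane s)
    exact (funext hHa : Ha = fun u => a' u / a u) ▸ this
  have hHbD : ∀ s, HasDerivAt Hb ((b'' s * b s - b' s * b' s) / b s ^ 2) s := by
    intro s
    have : HasDerivAt (fun u => b' u / b u) ((b'' s * b s - b' s * b' s) / b s ^ 2) s :=
      (hb' s).div (hb s) (hbne s)
    exact (funext hHb : Hb = fun u => b' u / b u) ▸ this
  have hdHa : HasDerivAt Ha (deriv Ha t) t := by rw [(hHaD t).deriv]; exact hHaD t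
  have hdHb : HasDerivAt Hb (deriv Hb t) t := by rw [(hHbD t).deriv]; exact hHbD t
  -- derivative of the 00-equation
  have hbsq : HasDerivAt (fun u => b u ^ 2) (2 * b t ^ 1 * b' t) t := (hb t).pow 2
  have hcurv : HasDerivAt (fun u => k / b u ^ 2)
      ((0 * b t ^ 2 - k * (2 * b t ^ 1 * b' t)) / (b t ^ 2) ^ 2) t :=
    (hasDerivAt_const t k).div hbsq (pow_ne_zero 2 (hbne t))
  have hLHS : HasDerivAt (fun u => 2 * Ha u * Hb u + Hb u ^ 2 + k / b u ^ 2)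
      ((2 * deriv Ha t * Hb t + 2 * Ha t * deriv Hb t) + 2 * Hb t ^ 1 * deriv Hb t
        + (0 * b t ^ 2 - k * (2 * b t ^ 1 * b' t)) / (b t ^ 2) ^ 2) t := by
    have h1 : HasDerivAt (fun u => 2 * Ha u * Hb u)
        (2 * deriv Ha t * Hb t + 2 * Ha t * deriv Hb t) t :=
      ((hdHa.const_mul 2).mul hdHb)
    exact (h1.add (hdHb.pow 2)).add hcurv
  have hVφ : HasDerivAt (fun u => V (φ u)) (deriv V (φ t) * φ' t) t :=
    ((hV (φ t)).hasDerivAt).comp t (hφ t)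
  have hRHS : HasDerivAt (fun u => (1 / 2) * φ' u ^ 2 + V (φ u))
      ((1 / 2) * (2 * φ' t ^ 1 * φ'' t) + deriv V (φ t) * φ' t) t :=
    (((hφ' t).pow 2).const_mul (1/2 : ℝ)).add hVφ
  have hfun : (fun u => 2 * Ha u * Hb u + Hb u ^ 2 + k / b u ^ 2)
      = fun u => (1 / 2) * φ' u ^ 2 + V (φ u) := funext e0
  have D0 : (2 * deriv Ha t * Hb t + 2 * Ha t * deriv Hb t) + 2 * Hb t ^ 1 * deriv Hb t
        + (0 * b t ^ 2 - k * (2 * b t ^ 1 * b' t)) / (b t ^ 2) ^ 2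
      = (1 / 2) * (2 * φ' t ^ 1 * φ'' t) + deriv V (φ t) * φ' t :=
    (hfun ▸ hLHS).unique hRHS
  -- algebra
  have hb'eq : b' t = Hb t * b t := by
    rw [hHb t, div_mul_cancel₀ _ (hbne t)]
  have hcsimp : (0 * b t ^ 2 - k * (2 * b t ^ 1 * b' t)) / (b t ^ 2) ^ 2
      = -2 * (k / b t ^ 2) * Hb t := by
    have hk : k = k / b t ^ 2 * b t ^ 2 :=
      (div_mul_cancel₀ k (pow_ne_zero 2 (hbne t))).symm
    rw [hb'eq, div_eq_iff (pow_ne_zero 2 (pow_ne_zero 2 (hbne t)))]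
    conv_lhs => rw [hk]
    ring
  rw [hcsimp] at D0
  have E0 := e0 t
  have E1 := e1 t
  have KG := kg t
  set A := Ha t
  set B := Hb t
  set X := deriv Ha t
  set Y := deriv Hb t
  set p := φ' t
  set q := φ'' t
  set c := k / b t ^ 2
  set Vv := V (φ t)
  set Vp := deriv V (φ t)
  have key : (2 * B) * (X + Y + A ^ 2 + A * B + B ^ 2)
      = (2 * B) * (-(1 / 2) * p ^ 2 + Vv) := by
    linear_combination D0 + p * KG - A * E1 + (A + 2 * B) * E0
  exact mul_left_cancel₀ (mul_ne_zero two_ne_zero hBt) key
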